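/- arXiv:2311.12017 — 2 statements merged into one kernel-verified Lean document; each statement's English description precedes it below -/
import Mathlib

section
/- Fix integers n ≥ 1 and 1 ≤ m₀ ≤ n, and arbitrary functions f_m : {0,1}^m → {0,1}^m for m₀ ≤ m ≤ n; define r := r^{m₀} by the downward recursion r^{n+1} = id and r^m(x) = r^{m+1}(f_m(MSB_m(x)) ‖ LSB_{n−m}(x)). For any cut m₀ ≤ c ≤ n, any function h : {0,1}^n → {0,1}, and T the 2^c × 2^{n−c} matrix with T_{ij} = (−1)^{h(r(i‖j))}, the matrix ρ := T·Tᵀ/2^n is positive semidefinite with trace 1 and its von Neumann entropy satisfies S(ρ) ≤ log₂ |range(f_c)|. -/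
/-!
Run up to the cut, the recursion only touches the first `c` bits, where it is the same
recursion on `c`-bit strings; its last step there applies `f_c`. Hence
`r(i ‖ j) = r^{c+1}(y ‖ j)` for some `y ∈ range f_c` depending only on `i`, so every row of `T`
is a row of a matrix indexed by `range f_c`, and `rank ρ ≤ rank T ≤ |range f_c|`.
The matrix `ρ` is a scaled Gram matrix, hence positive semidefinite, and its trace counts the
`2^n` entries `(±1)² = 1` of `T`. A density matrix of rank at most `K` has at most `K` nonzero
eigenvalues summing to `1`, so by Jensen's inequality for `log` its entropy is at most `log₂ K`.
-/

open scoped BigOperators Classical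
open Matrix

/-- Von Neumann entropy (base 2) of a Hermitian matrix, defined via its eigenvalues;
junk value `0` if the matrix is not Hermitian. -/
noncomputable def vnEntropy {𝕜 : Type*} [RCLike 𝕜] {d : Type*} [Fintype d] [DecidableEq d]
    (ρ : Matrix d d 𝕜) : ℝ :=
  if h : ρ.IsHermitian then -∑ i, h.eigenvalues i * Real.logb 2 (h.eigenvalues i) else 0

/-- The `m` most significant bits of an `n`-bit string (index `0` is most significant). -/
def msb {n : ℕ} (m : ℕ) (h : m ≤ n) (x : Fin n → Bool) : Fin m → Bool :=
  fun s => x ⟨s.1, lt_of_lt_of_le s.2 h⟩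

/-- Replace the `m` most significant bits of `x` by `f m` applied to them,
keeping the `n - m` least significant bits: this is `f_m(MSB_m(x)) ‖ LSB_{n-m}(x)`. -/
def rStep (n : ℕ) (f : ∀ m : ℕ, (Fin m → Bool) → (Fin m → Bool)) (m : ℕ) (h : m ≤ n)
    (x : Fin n → Bool) : Fin n → Bool :=
  fun t => if ht : (t : ℕ) < m then f m (msb m h x) ⟨t.1, ht⟩ else x t

/-- The downward recursion `r^{n+1} = id`, `r^m(x) = r^{m+1}(f_m(MSB_m(x)) ‖ LSB_{n-m}(x))`. -/
def rRec (n : ℕ) (f : ∀ m : ℕ, (Fin m → Bool) → (Fin m → Bool)) (m : ℕ)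
    (x : Fin n → Bool) : Fin n → Bool :=
  if h : m ≤ n then rRec n f (m + 1) (rStep n f m h x) else x
termination_by n + 1 - m
decreasing_by omega

/-- Concatenation `i ‖ j` of a `c`-bit string (most significant part) with an
`(n - c)`-bit string (least significant part) into an `n`-bit string. -/
def concatAt {n : ℕ} (c : ℕ) (i : Fin c → Bool) (j : Fin (n - c) → Bool) : Fin n → Bool :=
  fun t => if ht : (t : ℕ) < c then i ⟨t.1, ht⟩
    else if ht2 : (t : ℕ) - c < n - c then j ⟨t.1 - c, ht2⟩ else false

open Finset Real

section Entropy

variable {ι : Type*}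

lemma sum_negMulLog_le_log_card (s : Finset ι) {p : ι → ℝ} (hp : ∀ i ∈ s, 0 < p i)
    (hsum : ∑ i ∈ s, p i = 1) : ∑ i ∈ s, negMulLog (p i) ≤ log #s :=
  calc ∑ i ∈ s, negMulLog (p i) = ∑ i ∈ s, p i • log (p i)⁻¹ :=
        sum_congr rfl fun i _ => by rw [negMulLog, log_inv, smul_eq_mul]; ring
    _ ≤ log (∑ i ∈ s, p i • (p i)⁻¹) :=
        strictConcaveOn_log_Ioi.concaveOn.le_map_sum (fun i hi => (hp i hi).le) hsum
          fun i hi => inv_pos.2 (hp i hi)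
    _ = log #s := by
        simp only [smul_eq_mul, sum_congr rfl fun i hi => mul_inv_cancel₀ (hp i hi).ne']
        simp

lemma sum_negMulLog_le_log_of_card_support_le [Fintype ι] {p : ι → ℝ} (h0 : ∀ i, 0 ≤ p i)
    (h1 : ∑ i, p i = 1) {K : ℕ} (hK : Fintype.card {i // p i ≠ 0} ≤ K) :
    ∑ i, negMulLog (p i) ≤ log K := by
  set s : Finset ι := {i | p i ≠ 0}
  have hs_pos : ∀ i ∈ s, 0 < p i := fun i hi => (h0 i).lt_of_ne' (mem_filter.1 hi).2
  have hs_sum : ∑ i ∈ s, p i = 1 := by rw [sum_filter_ne_zero, h1]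
  have hs_ne : s.Nonempty := nonempty_of_sum_ne_zero (hs_sum ▸ one_ne_zero)
  have hs_card : #s ≤ K := by rwa [← Fintype.card_subtype]
  calc ∑ i, negMulLog (p i) = ∑ i ∈ s, negMulLog (p i) :=
        (sum_subset (subset_univ s) fun i _ hi => by simp_all [s]).symm
    _ ≤ log #s := sum_negMulLog_le_log_card s hs_pos hs_sum
    _ ≤ log K := log_le_log (by exact_mod_cast hs_ne.card_pos) (by exact_mod_cast hs_card)

lemma vnEntropy_le_logb_of_rank_le [Fintype ι] [DecidableEq ι] {M : Matrix ι ι ℝ}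
    (hM : M.PosSemidef) (htr : M.trace = 1) {K : ℕ} (hK : M.rank ≤ K) :
    vnEntropy M ≤ logb 2 K := by
  have hH : M.IsHermitian := hM.1
  have hsum : ∑ i, hH.eigenvalues i = 1 := by
    simpa [hH.trace_eq_sum_eigenvalues] using htr
  have hent := sum_negMulLog_le_log_of_card_support_le hM.eigenvalues_nonneg hsum
    (hH.rank_eq_card_non_zero_eigs ▸ hK)
  rw [vnEntropy, dif_pos hH, logb]
  calc -∑ i, hH.eigenvalues i * logb 2 (hH.eigenvalues i)
      = (∑ i, negMulLog (hH.eigenvalues i)) / log 2 := by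
        simp only [negMulLog, logb, sum_div, ← sum_neg_distrib]
        exact sum_congr rfl fun i _ => by ring
    _ ≤ log K / log 2 := div_le_div_of_nonneg_right hent (log_nonneg one_le_two)

end Entropy

section Recursion

variable {n : ℕ} (f : ∀ m : ℕ, (Fin m → Bool) → (Fin m → Bool))

lemma rRec_of_le {m : ℕ} (h : m ≤ n) (x : Fin n → Bool) :
    rRec n f m x = rRec n f (m + 1) (rStep n f m h x) := by
  rw [rRec, dif_pos h]

lemma rRec_of_lt {m : ℕ} (h : n < m) (x : Fin n → Bool) : rRec n f m x = x := by
  rw [rRec, dif_neg h.not_ge]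

lemma msb_concatAt {c m : ℕ} (hm : m ≤ c) (hc : c ≤ n) (i : Fin c → Bool)
    (j : Fin (n - c) → Bool) : msb m (hm.trans hc) (concatAt c i j) = msb m hm i := by
  funext s
  simp [msb, concatAt, s.2.trans_le hm]

lemma rStep_concatAt {c m : ℕ} (hm : m ≤ c) (hc : c ≤ n) (i : Fin c → Bool)
    (j : Fin (n - c) → Bool) :
    rStep n f m (hm.trans hc) (concatAt c i j) = concatAt c (rStep c f m hm i) j := by
  funext t
  by_cases htm : (t : ℕ) < m
  · simp [rStep, concatAt, htm, htm.trans_le hm, msb_concatAt hm hc]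
  · simp [rStep, concatAt, htm]

lemma rRec_concatAt {c m : ℕ} (hc : c ≤ n) (hm : m ≤ c + 1) (i : Fin c → Bool)
    (j : Fin (n - c) → Bool) :
    rRec n f m (concatAt c i j) = rRec n f (c + 1) (concatAt c (rRec c f m i) j) := by
  obtain rfl | hmc := eq_or_lt_of_le hm
  · rw [rRec_of_lt f (Nat.lt_succ_self c)]
  · have hmc : m ≤ c := Nat.le_of_lt_succ hmc
    rw [rRec_of_le f (hmc.trans hc), rStep_concatAt f hmc hc,
      rRec_concatAt hc (Nat.succ_le_succ hmc), rRec_of_le f hmc]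
termination_by c + 1 - m

lemma rRec_mem_range {c m : ℕ} (hm : m ≤ c) (i : Fin c → Bool) :
    rRec c f m i ∈ Set.range (f c) := by
  obtain rfl | hmc := eq_or_lt_of_le hm
  · rw [rRec_of_le f le_rfl, rRec_of_lt f (Nat.lt_succ_self m)]
    exact ⟨msb m le_rfl i, funext fun t => by simp [rStep, t.2]⟩
  · rw [rRec_of_le f hm]
    exact rRec_mem_range hmc _
termination_by c + 1 - m

end Recursion

lemma rank_le_card_of_rows_factor {ι κ ν R : Type*} [Fintype κ] [Fintype ν] [CommSemiring R]
    [StrongRankCondition R] {M : Matrix ι ν R} (g : ι → κ) (F : Matrix κ ν R)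
    (hM : ∀ i j, M i j = F (g i) j) : M.rank ≤ Fintype.card κ := by
  obtain rfl : M = F.submatrix g id := Matrix.ext hM
  exact (F.rank_submatrix_le g id).trans F.rank_le_card_height

lemma trace_mul_transpose_of_mul_self_eq_one {ι ν : Type*} [Fintype ι] [Fintype ν]
    {T : Matrix ι ν ℝ} (hT : ∀ i j, T i j * T i j = 1) :
    (T * Tᵀ).trace = Fintype.card ι * Fintype.card ν := by
  simp [Matrix.trace, Matrix.mul_apply, hT]

theorem statement4_general
    (n m₀ : ℕ)
    (f : ∀ m : ℕ, (Fin m → Bool) → (Fin m → Bool))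
    (c : ℕ) (hc1 : m₀ ≤ c) (hc2 : c ≤ n)
    (h : (Fin n → Bool) → Bool)
    (T : Matrix (Fin c → Bool) (Fin (n - c) → Bool) ℝ)
    (hT : ∀ i j, T i j = if h (rRec n f m₀ (concatAt c i j)) then (-1 : ℝ) else 1) :
    (((1 : ℝ) / 2 ^ n) • (T * Tᵀ)).PosSemidef ∧
      (((1 : ℝ) / 2 ^ n) • (T * Tᵀ)).trace = 1 ∧
      vnEntropy (((1 : ℝ) / 2 ^ n) • (T * Tᵀ))
        ≤ Real.logb 2 ((Finset.univ.image (f c)).card : ℝ) := by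
  set ρ : Matrix _ _ ℝ := ((1 : ℝ) / 2 ^ n) • (T * Tᵀ) with hρ_def
  have hρ : ρ.PosSemidef := by
    rw [hρ_def, ← conjTranspose_eq_transpose_of_trivial]
    exact (posSemidef_self_mul_conjTranspose T).smul (by positivity)
  have htr : ρ.trace = 1 := by
    rw [hρ_def, trace_smul, trace_mul_transpose_of_mul_self_eq_one fun i j => by
      rw [hT]; split <;> norm_num]
    simp [← pow_add, Nat.add_sub_cancel' hc2]
  refine ⟨hρ, htr, vnEntropy_le_logb_of_rank_le hρ htr ?_⟩
  have hrow : ∀ i j, T i j = Matrix.of (fun (a : univ.image (f c)) j =>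
      if h (rRec n f (c + 1) (concatAt c a.1 j)) then (-1 : ℝ) else 1)
        ⟨rRec c f m₀ i, by simpa using rRec_mem_range f hc1 i⟩ j := fun i j => by
    rw [hT, rRec_concatAt f hc2 (hc1.trans (Nat.le_succ c))]
    rfl
  calc ρ.rank = (T * ((1 : ℝ) / 2 ^ n) • Tᵀ).rank := by rw [hρ_def, Matrix.mul_smul]
    _ ≤ T.rank := Matrix.rank_mul_le_left _ _
    _ ≤ #(univ.image (f c)) :=
        (rank_le_card_of_rows_factor _ _ hrow).trans_eq (Fintype.card_coe _)

/-- For the deterministic multi-cut recursion and any cut position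
`m₀ ≤ c ≤ n`, the matrix `ρ = T Tᵀ / 2^n` built from the sign matrix
`T_{ij} = (-1)^{h(r(i ‖ j))}` is positive semidefinite with trace `1`, and its
von Neumann entropy is at most `log₂ |range f_c|`. -/
theorem statement4
    (n m₀ : ℕ) (hn : 1 ≤ n) (hm₀ : 1 ≤ m₀) (hm₀n : m₀ ≤ n)
    (f : ∀ m : ℕ, (Fin m → Bool) → (Fin m → Bool))
    (c : ℕ) (hc1 : m₀ ≤ c) (hc2 : c ≤ n)
    (h : (Fin n → Bool) → Bool)
    (T : Matrix (Fin c → Bool) (Fin (n - c) → Bool) ℝ)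
    (hT : ∀ i j, T i j = if h (rRec n f m₀ (concatAt c i j)) then (-1 : ℝ) else 1) :
    (((1 : ℝ) / 2 ^ n) • (T * Tᵀ)).PosSemidef ∧
      (((1 : ℝ) / 2 ^ n) • (T * Tᵀ)).trace = 1 ∧
      vnEntropy (((1 : ℝ) / 2 ^ n) • (T * Tᵀ))
        ≤ Real.logb 2 ((Finset.univ.image (f c)).card : ℝ) :=
  statement4_general n m₀ f c hc1 hc2 h T hT
end

section
/- Let m ≥ 1 and ε ≥ 0. Let F : {0,1}^m → {0,1}^m be a random function and let k be a uniformly random key for a 4-wise independent family {h_k : {0,1}^{2m} → {0,1}}, with k independent of F, and suppose Pr[F(i) = F(j)] ≤ ε for all distinct i, j ∈ {0,1}^m. Define the random 2^m × 2^m matrix T by T_{i,j} = (−1)^{h_k(F(i) ‖ j)} for i, j ∈ {0,1}^m. Then E[‖T·Tᵀ‖_F²] ≤ 2^{3m+1} + 2^{4m}·ε. -/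
open scoped BigOperators Classical
open Matrix

/-- Probability of an event under a (finite, weighted) probability mass function. -/
noncomputable def pr {Ω : Type*} [Fintype Ω] (p : Ω → ℝ) (E : Ω → Prop) : ℝ :=
  ∑ ω, if E ω then p ω else 0

/-- Squared Frobenius (Hilbert–Schmidt) norm of a real matrix. -/
def frobSq {a b : Type*} [Fintype a] [Fintype b] (M : Matrix a b ℝ) : ℝ :=
  ∑ i, ∑ j, M i j ^ 2

/-- Concatenation `a ‖ b` of two `m`-bit strings into a `2m`-bit string
(`a` is the most significant half). -/
def concatHalf {m : ℕ} (a b : Fin m → Bool) : Fin (2 * m) → Bool :=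
  fun t => if ht : (t : ℕ) < m then a ⟨t.1, ht⟩
    else if ht2 : (t : ℕ) - m < m then b ⟨t.1 - m, ht2⟩ else false

/-!
Expanding the Frobenius norm, `‖T Tᵀ‖_F²` is the sum over all `(i, i', j, j')` of the
4-cycle product `T i j * T i' j * T i j' * T i' j'`. This product is `1` when `i = i'` or
`j = j'`. Otherwise, conditionally on `F`, it is again `1` if `F i = F i'`, while if
`F i ≠ F i'` the four points `F i ‖ j, F i' ‖ j, F i ‖ j', F i' ‖ j'` are distinct and
4-wise independence makes the product of their signs a mean-zero variable; since the key is
independent of `F`, the expectation is `Pr[F i = F i'] ≤ ε`. Summing, the diagonal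
terms contribute `2 · 2^{3m}` and the rest `2^{4m} ε`.
-/

section Expectation

variable {Ω : Type*} [Fintype Ω] (p : Ω → ℝ)

def expect (X : Ω → ℝ) : ℝ := ∑ ω, p ω * X ω

variable {p}

theorem pr_congr {E E' : Ω → Prop} (h : ∀ ω, E ω ↔ E' ω) : pr p E = pr p E' := by
  simp only [pr, h]

theorem expect_const (hp1 : ∑ ω, p ω = 1) (c : ℝ) : expect p (fun _ => c) = c := by
  rw [expect, ← Finset.sum_mul, hp1, one_mul]

theorem expect_indicator (E : Ω → Prop) :
    expect p (fun ω => if E ω then 1 else 0) = pr p E := by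
  simp only [expect, pr, mul_ite, mul_one, mul_zero]

theorem expect_sum {κ : Type*} (s : Finset κ) (X : κ → Ω → ℝ) :
    expect p (fun ω => ∑ k ∈ s, X k ω) = ∑ k ∈ s, expect p (X k) := by
  simp only [expect, Finset.mul_sum]
  exact Finset.sum_comm

theorem expect_comp_eq_sum_pr {A : Type*} [Fintype A] (X : Ω → A) (f : A → ℝ) :
    expect p (fun ω => f (X ω)) = ∑ a, pr p (fun ω => X ω = a) * f a := by
  simp only [expect, pr, Finset.sum_mul, ite_mul, zero_mul]
  rw [Finset.sum_comm]
  simp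

theorem expect_comp_eq_sum_pr_mul_of_indep {A B : Type*} [Fintype A] [Fintype B]
    (X : Ω → A) (Y : Ω → B)
    (hXY : ∀ a b, pr p (fun ω => X ω = a ∧ Y ω = b)
      = pr p (fun ω => X ω = a) * pr p (fun ω => Y ω = b))
    (Φ : A → B → ℝ) :
    expect p (fun ω => Φ (X ω) (Y ω))
      = ∑ a, pr p (fun ω => X ω = a) * expect p (fun ω => Φ a (Y ω)) := by
  rw [expect_comp_eq_sum_pr (fun ω => (X ω, Y ω)) (fun ab => Φ ab.1 ab.2),
    Fintype.sum_prod_type]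
  refine Finset.sum_congr rfl fun a _ => ?_
  rw [expect_comp_eq_sum_pr Y, Finset.mul_sum]
  refine Finset.sum_congr rfl fun b _ => ?_
  rw [pr_congr (fun ω => Prod.ext_iff), hXY, mul_assoc]

end Expectation

def boolSign (b : Bool) : ℝ := if b then -1 else 1

theorem boolSign_mul_self (b : Bool) : boolSign b * boolSign b = 1 := by
  cases b <;> norm_num [boolSign]

theorem sum_boolSign : ∑ b : Bool, boolSign b = 0 := by
  norm_num [boolSign]

def IsKWiseUniform {Ω γ : Type*} [Fintype Ω] (p : Ω → ℝ) (H : Ω → γ → Bool) (r : ℕ) : Prop :=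
  ∀ (s : Finset γ) (b : γ → Bool), s.card ≤ r →
    pr p (fun ω => ∀ u ∈ s, H ω u = b u) = ((1 : ℝ) / 2) ^ s.card

namespace IsKWiseUniform

variable {Ω γ : Type*} [Fintype Ω] {p : Ω → ℝ} {H : Ω → γ → Bool} {r : ℕ}

theorem pr_restrict_eq (hH : IsKWiseUniform p H r) {s : Finset γ} (hs : s.card ≤ r)
    (b : s → Bool) : pr p (fun ω => (fun u : s => H ω u) = b) = ((1 : ℝ) / 2) ^ s.card := by
  rw [← hH s (fun u => if hu : u ∈ s then b ⟨u, hu⟩ else false) hs]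
  refine pr_congr fun ω => ⟨fun h u hu => by simp [hu, ← h], fun h => ?_⟩
  funext u
  simpa using h u u.2

/-- On `s`, `H` is uniform on `s → Bool`, so the mean factors through `∑ b, boolSign b = 0`. -/
theorem expect_prod_boolSign_eq_zero (hH : IsKWiseUniform p H r) {s : Finset γ}
    (hs : s.Nonempty) (hr : s.card ≤ r) :
    expect p (fun ω => ∏ u ∈ s, boolSign (H ω u)) = 0 := by
  simp_rw [← Finset.prod_coe_sort s]
  rw [expect_comp_eq_sum_pr (fun ω (u : s) => H ω u) (fun b => ∏ u, boolSign (b u))]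
  simp_rw [hH.pr_restrict_eq hr, ← Finset.mul_sum]
  rw [← Fintype.prod_sum (fun _ => boolSign), sum_boolSign, Finset.prod_const,
    zero_pow (Finset.card_ne_zero.mpr (Finset.univ_nonempty_iff.mpr hs.to_subtype)), mul_zero]

end IsKWiseUniform

theorem concatHalf_injective2 {m : ℕ} : Function.Injective2 (concatHalf (m := m)) := by
  intro a a' b b' h
  constructor
  · funext t
    simpa [concatHalf] using congrFun h ⟨t, by omega⟩
  · funext t
    have hlo : ¬ m + t < m := by omega
    simpa [concatHalf, hlo] using congrFun h ⟨m + t, by omega⟩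

def signMatrix {ι α β γ : Type*} (h : γ → Bool) (c : α → β → γ) (f : ι → α) : Matrix ι β ℝ :=
  fun i j => boolSign (h (c (f i) j))

def fourCycle {ι β : Type*} (M : Matrix ι β ℝ) (i i' : ι) (j j' : β) : ℝ :=
  M i j * M i' j * (M i j' * M i' j')

theorem frobSq_mul_transpose {a b : Type*} [Fintype a] [Fintype b] (M : Matrix a b ℝ) :
    frobSq (M * Mᵀ) = ∑ i, ∑ i', ∑ j, ∑ j', fourCycle M i i' j j' := by
  simp only [frobSq, fourCycle, Matrix.mul_apply, Matrix.transpose_apply, sq,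
    Finset.sum_mul_sum]

section SignMatrix

variable {Ω ι α β γ : Type*} [Fintype Ω] {p : Ω → ℝ} {H : Ω → γ → Bool} {c : α → β → γ}

theorem fourCycle_signMatrix_of_eq (h : γ → Bool) (f : ι → α) {i i' : ι} (j j' : β)
    (hf : f i = f i') : fourCycle (signMatrix h c f) i i' j j' = 1 := by
  simp only [fourCycle, signMatrix, hf, boolSign_mul_self]
  norm_num

theorem fourCycle_signMatrix_self_right (h : γ → Bool) (f : ι → α) (i i' : ι) (j : β) :
    fourCycle (signMatrix h c f) i i' j j = 1 := by
  rw [fourCycle, mul_mul_mul_comm]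
  simp only [signMatrix, boolSign_mul_self, mul_one]

theorem expect_fourCycle_signMatrix_of_ne (hH : IsKWiseUniform p H 4)
    (hc : Function.Injective2 c) (f : ι → α) {i i' : ι} {j j' : β} (hf : f i ≠ f i')
    (hj : j ≠ j') : expect p (fun ω => fourCycle (signMatrix (H ω) c f) i i' j j') = 0 := by
  set l := [c (f i) j, c (f i') j, c (f i) j', c (f i') j']
  have hl : l.Nodup := by simp [l, hc.eq_iff, hf, hj, hf.symm]
  have h4 := hH.expect_prod_boolSign_eq_zero (s := l.toFinset) ⟨_, List.mem_toFinset.mpr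
    List.mem_cons_self⟩ (List.toFinset_card_of_nodup hl).le
  simp_rw [List.prod_toFinset _ hl] at h4
  simpa [fourCycle, signMatrix, mul_assoc, l] using h4

variable [Fintype ι] [Fintype α] [Fintype γ] {F : Ω → ι → α}

theorem expect_fourCycle_signMatrix (hp1 : ∑ ω, p ω = 1) (hH : IsKWiseUniform p H 4)
    (hc : Function.Injective2 c)
    (hInd : ∀ g hh, pr p (fun ω => F ω = g ∧ H ω = hh)
      = pr p (fun ω => F ω = g) * pr p (fun ω => H ω = hh))
    (i i' : ι) {j j' : β} (hj : j ≠ j') :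
    expect p (fun ω => fourCycle (signMatrix (H ω) c (F ω)) i i' j j')
      = pr p (fun ω => F ω i = F ω i') := by
  classical
  have hcond : ∀ g : ι → α, expect p (fun ω => fourCycle (signMatrix (H ω) c g) i i' j j')
      = if g i = g i' then 1 else 0 := by
    intro g
    split_ifs with hg
    · simp only [fourCycle_signMatrix_of_eq _ g j j' hg, expect_const hp1]
    · exact expect_fourCycle_signMatrix_of_ne hH hc g hg hj
  rw [expect_comp_eq_sum_pr_mul_of_indep F H hInd
    (fun g h => fourCycle (signMatrix h c g) i i' j j')]
  simp only [hcond]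
  rw [← expect_comp_eq_sum_pr F (fun g => if g i = g i' then 1 else 0), expect_indicator]

theorem expect_fourCycle_signMatrix_le [DecidableEq ι] [DecidableEq β] {ε : ℝ} (hε : 0 ≤ ε)
    (hp1 : ∑ ω, p ω = 1) (hH : IsKWiseUniform p H 4) (hc : Function.Injective2 c)
    (hInd : ∀ g hh, pr p (fun ω => F ω = g ∧ H ω = hh)
      = pr p (fun ω => F ω = g) * pr p (fun ω => H ω = hh))
    (hcol : ∀ i i', i ≠ i' → pr p (fun ω => F ω i = F ω i') ≤ ε) (i i' : ι) (j j' : β) :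
    expect p (fun ω => fourCycle (signMatrix (H ω) c (F ω)) i i' j j')
      ≤ (if i = i' then 1 else 0) + (if j = j' then 1 else 0) + ε := by
  by_cases hi : i = i'
  · simp only [hi, fourCycle_signMatrix_of_eq _ _ j j' rfl, expect_const hp1, if_true]
    split_ifs <;> linarith
  by_cases hj : j = j'
  · simp only [hi, hj, fourCycle_signMatrix_self_right, expect_const hp1, if_true, if_false]
    linarith
  rw [expect_fourCycle_signMatrix hp1 hH hc hInd i i' hj, if_neg hi, if_neg hj, zero_add, zero_add]
  exact hcol i i' hi

end SignMatrix

theorem sum_four_ite_eq_add_const {κ : Type*} [Fintype κ] [DecidableEq κ] (ε : ℝ) :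
    ∑ i : κ, ∑ i' : κ, ∑ j : κ, ∑ j' : κ,
      ((if i = i' then 1 else 0) + (if j = j' then 1 else 0) + ε)
      = 2 * (Fintype.card κ : ℝ) ^ 3 + (Fintype.card κ : ℝ) ^ 4 * ε := by
  simp only [Finset.sum_add_distrib, Finset.sum_const, Finset.sum_ite_eq, Finset.mem_univ,
    if_true, Finset.card_univ, nsmul_eq_mul, mul_ite, mul_one, mul_zero]
  ring

theorem statement8_general
    (m : ℕ) (ε : ℝ) (hε : 0 ≤ ε)
    (Ω : Type*) [Fintype Ω] (p : Ω → ℝ)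
    (hp1 : ∑ ω, p ω = 1)
    (F : Ω → (Fin m → Bool) → (Fin m → Bool))
    (Hf : Ω → (Fin (2 * m) → Bool) → Bool)
    -- `Hf` comes from a 4-wise independent family with a uniformly random key
    (hH4 : ∀ (s : Finset (Fin (2 * m) → Bool)) (b : (Fin (2 * m) → Bool) → Bool),
      s.card ≤ 4 →
      pr p (fun ω => ∀ u ∈ s, Hf ω u = b u) = ((1 : ℝ) / 2) ^ s.card)
    -- the key of `Hf` is independent of `F`
    (hInd : ∀ (g : (Fin m → Bool) → (Fin m → Bool)) (hh : (Fin (2 * m) → Bool) → Bool),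
      pr p (fun ω => F ω = g ∧ Hf ω = hh)
        = pr p (fun ω => F ω = g) * pr p (fun ω => Hf ω = hh))
    -- collision bound for `F`
    (hcol : ∀ i j : Fin m → Bool, i ≠ j → pr p (fun ω => F ω i = F ω j) ≤ ε)
    (T : Ω → Matrix (Fin m → Bool) (Fin m → Bool) ℝ)
    (hT : ∀ ω i j, T ω i j = if Hf ω (concatHalf (F ω i) j) then (-1 : ℝ) else 1) :
    ∑ ω, p ω * frobSq (T ω * (T ω)ᵀ) ≤ 2 ^ (3 * m + 1) + 2 ^ (4 * m) * ε := by
  obtain rfl : T = fun ω => signMatrix (Hf ω) concatHalf (F ω) :=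
    funext fun ω => Matrix.ext (hT ω)
  change expect p (fun ω => frobSq _) ≤ _
  simp only [frobSq_mul_transpose, expect_sum]
  calc _ ≤ ∑ i : Fin m → Bool, ∑ i', ∑ j : Fin m → Bool, ∑ j',
        ((if i = i' then 1 else 0) + (if j = j' then 1 else 0) + ε) := by
        gcongr with i _ i' _ j _ j' _
        exact expect_fourCycle_signMatrix_le hε hp1 hH4 concatHalf_injective2 hInd hcol i i' j j'
    _ = 2 * ((2 : ℝ) ^ m) ^ 3 + ((2 : ℝ) ^ m) ^ 4 * ε := by
        simp [sum_four_ite_eq_add_const]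
    _ = 2 ^ (3 * m + 1) + 2 ^ (4 * m) * ε := by ring

/-- Single-cut construction: if `F` has collision probability at most `ε`
and `Hf` comes from a 4-wise independent family (independent of `F`), then the sign matrix
`T_{ij} = (-1)^{h_k(F(i) ‖ j)}` satisfies `E[‖T Tᵀ‖_F²] ≤ 2^{3m+1} + 2^{4m} ε`. -/
theorem statement8
    (m : ℕ) (hm : 1 ≤ m) (ε : ℝ) (hε : 0 ≤ ε)
    (Ω : Type*) [Fintype Ω] (p : Ω → ℝ)
    (hp0 : ∀ ω, 0 ≤ p ω) (hp1 : ∑ ω, p ω = 1)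
    (F : Ω → (Fin m → Bool) → (Fin m → Bool))
    (Hf : Ω → (Fin (2 * m) → Bool) → Bool)
    -- `Hf` comes from a 4-wise independent family with a uniformly random key
    (hH4 : ∀ (s : Finset (Fin (2 * m) → Bool)) (b : (Fin (2 * m) → Bool) → Bool),
      s.card ≤ 4 →
      pr p (fun ω => ∀ u ∈ s, Hf ω u = b u) = ((1 : ℝ) / 2) ^ s.card)
    -- the key of `Hf` is independent of `F`
    (hInd : ∀ (g : (Fin m → Bool) → (Fin m → Bool)) (hh : (Fin (2 * m) → Bool) → Bool),
      pr p (fun ω => F ω = g ∧ Hf ω = hh)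
        = pr p (fun ω => F ω = g) * pr p (fun ω => Hf ω = hh))
    -- collision bound for `F`
    (hcol : ∀ i j : Fin m → Bool, i ≠ j → pr p (fun ω => F ω i = F ω j) ≤ ε)
    (T : Ω → Matrix (Fin m → Bool) (Fin m → Bool) ℝ)
    (hT : ∀ ω i j, T ω i j = if Hf ω (concatHalf (F ω i) j) then (-1 : ℝ) else 1) :
    ∑ ω, p ω * frobSq (T ω * (T ω)ᵀ) ≤ 2 ^ (3 * m + 1) + 2 ^ (4 * m) * ε :=
  statement8_general m ε hε Ω p hp1 F Hf hH4 hInd hcol T hT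
end
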